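/- Let V ∈ C([−1,1]) be complex-valued. Then there exists a constant C > 0 (depending only on sup_{x∈[−1,1]}|V(x)|) such that for all λ ∈ ℂ∖{0} with |λ| ≤ 1 and Re λ ≥ −1/4, and all 0 ≤ y ≤ x < 1, one has |K(y,x,λ)| ≤ C (1−x)^{−1/2}. -/

import Mathlib

/-!
With `r = ((1-y)/(1+y)) / ((1-x)/(1+x)) ∈ [1, 2/(1-x)]` the kernel is `(2λ)⁻¹ (1 - r^{-λ}) V(x)`.
Writing `1 - r^{-λ} = λ ∫_{-log r}^0 e^{λu} du` and using `Re λ ≥ -1/4` gives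
`|1 - r^{-λ}| ≤ |λ| log r · r^{1/4}`, so the singular factor `λ⁻¹` cancels; then
`log r ≤ 4 r^{1/4}` yields `|K| ≤ 2 r^{1/2} |V(x)| ≤ 2√2 (1-x)^{-1/2} sup |V|`.
-/

open MeasureTheory Set ENNReal

/-- The Volterra kernel
`K(y,x,λ) = (2λ)⁻¹ [1 − ((1−y)/(1+y))^{−λ} ((1−x)/(1+x))^{λ}] V(x)`. -/
noncomputable def Kker (V : ℝ → ℂ) (lam : ℂ) (y x : ℝ) : ℂ :=
  (2 * lam)⁻¹ * (1 - (((1 - y)/(1 + y) : ℝ) : ℂ) ^ (-lam) *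
    (((1 - x)/(1 + x) : ℝ) : ℂ) ^ lam) * V x

lemma norm_one_sub_exp_neg_mul_le {lam : ℂ} {c t : ℝ} (hc : 0 ≤ c) (hre : -c ≤ lam.re)
    (ht : 0 ≤ t) : ‖1 - Complex.exp (-(lam * t))‖ ≤ ‖lam‖ * t * Real.exp (c * t) := by
  rcases eq_or_ne lam 0 with rfl | hlam
  · simp
  have hint : 1 - Complex.exp (-(lam * t)) = lam * ∫ u in -t..0, Complex.exp (lam * u) := by
    rw [integral_exp_mul_complex hlam, mul_div_cancel₀ _ hlam]
    simp
  have hbound : ∀ u ∈ uIoc (-t) 0, ‖Complex.exp (lam * u)‖ ≤ Real.exp (c * t) := by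
    intro u hu
    rw [uIoc_of_le (by linarith)] at hu
    rw [Complex.norm_exp, Complex.re_mul_ofReal, Real.exp_le_exp]
    nlinarith [hu.1, hu.2]
  calc ‖1 - Complex.exp (-(lam * t))‖
      ≤ ‖lam‖ * (Real.exp (c * t) * |0 - -t|) := by
        rw [hint, norm_mul]
        gcongr
        exact intervalIntegral.norm_integral_le_of_norm_le_const hbound
    _ = ‖lam‖ * t * Real.exp (c * t) := by
        rw [zero_sub, neg_neg, abs_of_nonneg ht]; ring

lemma norm_one_sub_cpow_neg_le {lam : ℂ} {c r : ℝ} (hc : 0 ≤ c) (hre : -c ≤ lam.re)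
    (hr : 1 ≤ r) : ‖1 - (r : ℂ) ^ (-lam)‖ ≤ ‖lam‖ * Real.log r * r ^ c := by
  have hr0 : 0 < r := by linarith
  have hcpow : (r : ℂ) ^ (-lam) = Complex.exp (-(lam * Real.log r)) := by
    rw [Complex.cpow_def_of_ne_zero (by exact_mod_cast hr0.ne'), ← Complex.ofReal_log hr0.le]
    ring_nf
  rw [hcpow, Real.rpow_def_of_pos hr0, mul_comm (Real.log r) c]
  exact norm_one_sub_exp_neg_mul_le hc hre (Real.log_nonneg hr)

lemma ofReal_cpow_neg_mul_ofReal_cpow {a b : ℝ} (ha : 0 ≤ a) (hb : 0 ≤ b) (lam : ℂ) :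
    (a : ℂ) ^ (-lam) * (b : ℂ) ^ lam = ((a / b : ℝ) : ℂ) ^ (-lam) := by
  rw [Complex.ofReal_div, Complex.div_cpow_ofReal_nonneg ha hb, Complex.cpow_neg (b : ℂ),
    div_inv_eq_mul]

lemma cayley_ratio_mem_Icc {x y : ℝ} (hy : 0 ≤ y) (hyx : y ≤ x) (hx : x < 1) :
    ((1 - y) / (1 + y)) / ((1 - x) / (1 + x)) ∈ Icc 1 (2 / (1 - x)) := by
  rw [div_div_div_eq, mem_Icc, one_le_div (by nlinarith),
    div_le_div_iff₀ (by nlinarith) (by linarith)]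
  constructor <;> nlinarith [mul_nonneg hy (sub_nonneg.2 hx.le)]

lemma norm_Kker_le (V : ℝ → ℂ) {lam : ℂ} (hlam : lam ≠ 0) (hre : -(1 / 4) ≤ lam.re)
    {x y : ℝ} (hy : 0 ≤ y) (hyx : y ≤ x) (hx : x < 1) :
    ‖Kker V lam y x‖ ≤ 2 * √2 * (1 - x) ^ (-(1 / 2) : ℝ) * ‖V x‖ := by
  obtain ⟨hr1, hr2⟩ := cayley_ratio_mem_Icc hy hyx hx
  set r := ((1 - y) / (1 + y)) / ((1 - x) / (1 + x))
  have hr0 : 0 ≤ r := by linarith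
  have hK : Kker V lam y x = (2 * lam)⁻¹ * (1 - (r : ℂ) ^ (-lam)) * V x := by
    rw [Kker, ofReal_cpow_neg_mul_ofReal_cpow
      (div_nonneg (by linarith [hyx.trans_lt hx]) (by linarith))
      (div_nonneg (by linarith) (by linarith [hy.trans hyx]))]
  have hlog : Real.log r ≤ 4 * r ^ (1 / 4 : ℝ) := by
    have := Real.log_le_rpow_div hr0 (by norm_num : (0 : ℝ) < 1 / 4)
    linarith
  have hsqrt : r ^ (1 / 2 : ℝ) ≤ √2 * (1 - x) ^ (-(1 / 2) : ℝ) := by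
    calc r ^ (1 / 2 : ℝ) ≤ (2 / (1 - x)) ^ (1 / 2 : ℝ) := by gcongr
      _ = √2 * (1 - x) ^ (-(1 / 2) : ℝ) := by
        rw [Real.div_rpow zero_le_two (by linarith), Real.sqrt_eq_rpow,
          Real.rpow_neg (by linarith), div_eq_mul_inv]
  have hlam' : 0 < ‖lam‖ := norm_pos_iff.2 hlam
  calc ‖Kker V lam y x‖ = ‖1 - (r : ℂ) ^ (-lam)‖ / (2 * ‖lam‖) * ‖V x‖ := by
        rw [hK, norm_mul, norm_mul, norm_inv, norm_mul, Complex.norm_two]; ring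
    _ ≤ ‖lam‖ * Real.log r * r ^ (1 / 4 : ℝ) / (2 * ‖lam‖) * ‖V x‖ := by
        gcongr; exact norm_one_sub_cpow_neg_le (by norm_num) hre hr1
    _ = Real.log r * r ^ (1 / 4 : ℝ) / 2 * ‖V x‖ := by field_simp
    _ ≤ 4 * r ^ (1 / 4 : ℝ) * r ^ (1 / 4 : ℝ) / 2 * ‖V x‖ := by gcongr
    _ = 2 * r ^ (1 / 2 : ℝ) * ‖V x‖ := by
        rw [mul_assoc 4, ← Real.rpow_add' hr0 (by norm_num)]; ring_nf
    _ ≤ 2 * (√2 * (1 - x) ^ (-(1 / 2) : ℝ)) * ‖V x‖ := by gcongr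
    _ = 2 * √2 * (1 - x) ^ (-(1 / 2) : ℝ) * ‖V x‖ := by ring

/-- Kernel bound for small `λ` (from the proof of Proposition `prop:v1`): there is a
constant `C > 0`, depending only on `sup |V|`, such that
`|K(y,x,λ)| ≤ C (1−x)^{−1/2}` for all `λ ≠ 0` with `|λ| ≤ 1`, `Re λ ≥ −1/4`, and
`0 ≤ y ≤ x < 1`. -/
theorem stmt17 (V : ℝ → ℂ) (hV : ContinuousOn V (Icc (-1:ℝ) 1)) :
    ∃ C : ℝ, 0 < C ∧ ∀ lam : ℂ, lam ≠ 0 → ‖lam‖ ≤ 1 → -(1/4) ≤ lam.re →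
      ∀ y x : ℝ, 0 ≤ y → y ≤ x → x < 1 →
        ‖Kker V lam y x‖ ≤ C * (1 - x) ^ (-(1/2) : ℝ) := by
  obtain ⟨M, hM⟩ := isCompact_Icc.exists_bound_of_continuousOn hV
  refine ⟨2 * √2 * max M 1, by positivity, fun lam hlam _ hre y x hy hyx hx => ?_⟩
  have hVx : ‖V x‖ ≤ max M 1 := (hM x ⟨by linarith, hx.le⟩).trans (le_max_left _ _)
  calc ‖Kker V lam y x‖ ≤ 2 * √2 * (1 - x) ^ (-(1 / 2) : ℝ) * ‖V x‖ :=
        norm_Kker_le V hlam hre hy hyx hx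
    _ ≤ 2 * √2 * (1 - x) ^ (-(1 / 2) : ℝ) * max M 1 := by gcongr
    _ = 2 * √2 * max M 1 * (1 - x) ^ (-(1 / 2) : ℝ) := by ring
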